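/- arXiv:1504.04422 — 2 statements merged into one kernel-verified Lean document; each statement's English description precedes it below -/
import Mathlib

section
/- Let Γ be a finite connected non-complete graph of prime valency p that is 2-geodesic transitive but not 2-arc transitive. Then for every pair of adjacent vertices v,u, the number of common neighbours of v and u equals (p-1)/2. -/
open SimpleGraph

/-- `Γ` is arc transitive: its automorphism group is transitive on ordered pairs
of adjacent vertices. -/
def ArcTransitive {V : Type*} (Γ : SimpleGraph V) : Prop :=
  ∀ ⦃v u v' u' : V⦄, Γ.Adj v u → Γ.Adj v' u' →
    ∃ φ : Γ ≃g Γ, φ v = v' ∧ φ u = u'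

/-- `(v,u,w)` is a 2-arc of `Γ`. -/
def Is2Arc {V : Type*} (Γ : SimpleGraph V) (v u w : V) : Prop :=
  Γ.Adj v u ∧ Γ.Adj u w ∧ v ≠ w

/-- `(v,u,w)` is a 2-geodesic of `Γ`: a 2-arc with `v`, `w` non-adjacent. -/
def Is2Geodesic {V : Type*} (Γ : SimpleGraph V) (v u w : V) : Prop :=
  Γ.Adj v u ∧ Γ.Adj u w ∧ v ≠ w ∧ ¬ Γ.Adj v w

/-- `Γ` is 2-arc transitive: arc transitive and transitive on 2-arcs. -/
def TwoArcTransitive {V : Type*} (Γ : SimpleGraph V) : Prop :=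
  ArcTransitive Γ ∧
  ∀ ⦃v u w v' u' w' : V⦄, Is2Arc Γ v u w → Is2Arc Γ v' u' w' →
    ∃ φ : Γ ≃g Γ, φ v = v' ∧ φ u = u' ∧ φ w = w'

/-- `Γ` is 2-geodesic transitive: arc transitive and transitive on 2-geodesics. -/
def TwoGeodesicTransitive {V : Type*} (Γ : SimpleGraph V) : Prop :=
  ArcTransitive Γ ∧
  ∀ ⦃v u w v' u' w' : V⦄, Is2Geodesic Γ v u w → Is2Geodesic Γ v' u' w' →
    ∃ φ : Γ ≃g Γ, φ v = v' ∧ φ u = u' ∧ φ w = w'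

/-!
For an arc `(v, u)` let `l = |Γ(u) ∩ Γ(v)|` and `n = |Γ(u) \ ({v} ∪ Γ(v))|`, so `p = l + n + 1`.
Here `l > 0`, as otherwise every 2-arc is a 2-geodesic, and `n > 0`, as `Γ` is not complete.

The group induced on `Γ(u)` by the stabiliser of `u` is transitive of prime degree `p`. Identify
`Γ(u)` with `ZMod p` so that an element of order `p` becomes `x ↦ x + 1`. Schur's multiplier
argument (the Frobenius map on the group algebra `𝔽_q[ZMod p]`) shows that `x ↦ m x` maps unions
of suborbits to unions of suborbits, so all nontrivial suborbits have the same length. By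
2-geodesic transitivity `Γ(u) \ ({v} ∪ Γ(v))` is a single suborbit, while `Γ(u) ∩ Γ(v)` is a
union of suborbits; hence `n ∣ l`.

Let `c = |Γ(v) ∩ Γ(w)|` for a 2-geodesic `(v, u, w)`. Counting edges between `Γ(u)` and the
vertices at distance two from `u` gives `c ∣ p n`. Moreover `c < p`: otherwise `Γ(u)` splits into
classes of vertices with equal neighbourhoods, each of size `n + 1`. So `c ≤ n`, and
inclusion–exclusion inside `Γ(u)` gives `2 l + 3 ≤ c + p`, i.e. `l < 2 n`. With `n ∣ l` this
forces `l = n`.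
-/

open Equiv

lemma Set.dvd_ncard_of_forall_ncard_fiber_eq {α β : Type*} [Finite α] {S : Set α}
    (f : α → β) {d : ℕ} (hd : ∀ x ∈ S, {y | y ∈ S ∧ f y = f x}.ncard = d) :
    d ∣ S.ncard := by
  classical
  have := Fintype.ofFinite α
  rw [Set.ncard_eq_toFinset_card', Finset.card_eq_sum_card_image f]
  refine Finset.dvd_sum fun b hb => ?_
  obtain ⟨x, hx, rfl⟩ := Finset.mem_image.1 hb
  rw [← hd x (Set.mem_toFinset.1 hx), Set.ncard_eq_toFinset_card']
  exact dvd_of_eq (congrArg Finset.card (by ext; simp))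

section Suborbit

variable {α : Type*} (H : Subgroup (Perm α)) (ω : α)

def suborbit (x : α) : Set α := {y | ∃ h ∈ H, h ω = ω ∧ h x = y}

def IsStabilizerInvariant (S : Set α) : Prop := ∀ h ∈ H, h ω = ω → Set.MapsTo h S S

variable {H ω}

lemma mem_suborbit_self (x : α) : x ∈ suborbit H ω x := ⟨1, H.one_mem, rfl, rfl⟩

lemma isStabilizerInvariant_suborbit (x : α) : IsStabilizerInvariant H ω (suborbit H ω x) := by
  rintro g hg hgω _ ⟨h, hh, hhω, rfl⟩
  exact ⟨g * h, H.mul_mem hg hh, by simp [hhω, hgω], rfl⟩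

lemma IsStabilizerInvariant.suborbit_subset {S : Set α} (hS : IsStabilizerInvariant H ω S)
    {x : α} (hx : x ∈ S) : suborbit H ω x ⊆ S := by
  rintro _ ⟨h, hh, hhω, rfl⟩
  exact hS h hh hhω hx

lemma suborbit_eq_of_mem {x y : α} (hy : y ∈ suborbit H ω x) :
    suborbit H ω y = suborbit H ω x := by
  refine subset_antisymm ((isStabilizerInvariant_suborbit x).suborbit_subset hy)
    ((isStabilizerInvariant_suborbit y).suborbit_subset ?_)
  obtain ⟨h, hh, hhω, rfl⟩ := hy
  exact ⟨h⁻¹, H.inv_mem hh, Perm.inv_eq_iff_eq.2 hhω.symm, by simp⟩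

lemma IsStabilizerInvariant.dvd_ncard [Finite α] {S : Set α} (hS : IsStabilizerInvariant H ω S)
    {d : ℕ} (hd : ∀ x ∈ S, (suborbit H ω x).ncard = d) : d ∣ S.ncard := by
  refine Set.dvd_ncard_of_forall_ncard_fiber_eq (suborbit H ω) fun x hx => ?_
  rw [← hd x hx]
  congr 1
  ext y
  exact ⟨fun ⟨_, hyx⟩ => hyx ▸ mem_suborbit_self y,
    fun hy => ⟨hS.suborbit_subset hx hy, suborbit_eq_of_mem hy⟩⟩

end Suborbit

lemma AddMonoidAlgebra.coeff_sum_single_one {A R : Type*} [AddMonoid A] [Semiring R]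
    [DecidableEq A] (T : Finset A) (x : A) :
    (∑ a ∈ T, AddMonoidAlgebra.single a (1 : R)).coeff x = if x ∈ T then 1 else 0 := by
  simp [AddMonoidAlgebra.coeff_sum, Finsupp.single_apply]

section Frobenius

variable {A : Type*} [AddCommGroup A] [Fintype A] {G : Subgroup (Perm A)}

def stabilizerInvariantSubsemiring (R : Type*) [CommSemiring R]
    (hT : ∀ a, Equiv.addLeft a ∈ G) : Subsemiring (AddMonoidAlgebra R A) where
  carrier := {f | ∀ g ∈ G, g 0 = 0 → ∀ x, f.coeff (g x) = f.coeff x}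
  zero_mem' := by simp
  add_mem' hf hf' g hg hg0 x := by simp [hf g hg hg0, hf' g hg hg0]
  one_mem' g hg hg0 x := by
    classical
    have : 0 = g x ↔ 0 = x := by rw [← hg0, g.injective.eq_iff, hg0]
    simp only [AddMonoidAlgebra.one_def, AddMonoidAlgebra.coeff_single, Finsupp.single_apply, this]
  mul_mem' {f f'} hf hf' g hg hg0 z := by
    have conv (z : A) : (f * f').coeff z = ∑ w, f.coeff w * f'.coeff (-w + z) := by
      rw [AddMonoidAlgebra.coeff_mul_apply_left, Finsupp.sum_fintype _ _ (by simp)]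
    -- `y ↦ g (w + y) - g w` lies in the stabiliser of `0`, so it preserves `f'`.
    have hshift (w y : A) : f'.coeff (-g w + g (w + y)) = f'.coeff y := by
      refine hf' (Equiv.addLeft (-g w) * g * Equiv.addLeft w) ?_ (by simp) y
      exact G.mul_mem (G.mul_mem (hT _) hg) (hT _)
    rw [conv, conv, ← Equiv.sum_comp g]
    refine Finset.sum_congr rfl fun w _ => ?_
    rw [hf g hg hg0, ← hshift w (-w + z), add_neg_cancel_left]

lemma sum_single_one_mem_stabilizerInvariantSubsemiring_iff {R : Type*} [CommSemiring R]
    [Nontrivial R] [DecidableEq A] (hT : ∀ a, Equiv.addLeft a ∈ G) (T : Finset A) :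
    ∑ a ∈ T, AddMonoidAlgebra.single a (1 : R) ∈ stabilizerInvariantSubsemiring R hT ↔
      IsStabilizerInvariant G 0 (T : Set A) := by
  refine ⟨fun h g hg hg0 x hx => ?_, fun h g hg hg0 x => ?_⟩
  · have := h g hg hg0 x
    rw [AddMonoidAlgebra.coeff_sum_single_one, AddMonoidAlgebra.coeff_sum_single_one] at this
    simp_all
  · have hiff : g x ∈ T ↔ x ∈ T := by
      refine ⟨fun hx => ?_, fun hx => h g hg hg0 hx⟩
      simpa using h g⁻¹ (G.inv_mem hg) (Perm.inv_eq_iff_eq.2 hg0.symm) hx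
    simp only [AddMonoidAlgebra.coeff_sum_single_one, hiff]

lemma IsStabilizerInvariant.image_nsmul_of_prime (hT : ∀ a, Equiv.addLeft a ∈ G) {q : ℕ}
    (hq : q.Prime) (hinj : Function.Injective (q • · : A → A)) {S : Set A}
    (hS : IsStabilizerInvariant G 0 S) : IsStabilizerInvariant G 0 ((q • ·) '' S) := by
  classical
  have := Fact.mk hq
  have : ExpChar (AddMonoidAlgebra (ZMod q) A) q := ExpChar.of_injective_algebraMap' (ZMod q) q
  have hmem := (sum_single_one_mem_stabilizerInvariantSubsemiring_iff (R := ZMod q) hT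
    S.toFinset).2 (by simpa using hS)
  have hpow := pow_mem hmem q
  simp only [sum_pow_char, AddMonoidAlgebra.single_pow, one_pow] at hpow
  rw [← Finset.sum_image (f := (AddMonoidAlgebra.single · (1 : ZMod q))) hinj.injOn] at hpow
  simpa using (sum_single_one_mem_stabilizerInvariantSubsemiring_iff hT _).1 hpow

end Frobenius

section PrimeCyclic

variable {p : ℕ} [Fact p.Prime] {G : Subgroup (Perm (ZMod p))}

lemma addLeft_mem_of_addLeft_one_mem (hT : Equiv.addLeft 1 ∈ G) (a : ZMod p) :
    Equiv.addLeft a ∈ G := by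
  have key (n : ℕ) : Equiv.addLeft (n : ZMod p) ∈ G := by
    induction n with
    | zero => simp
    | succ n ih =>
      have : Equiv.addLeft ((n + 1 : ℕ) : ZMod p) =
          Equiv.addLeft 1 * Equiv.addLeft (n : ZMod p) := by
        ext x
        simp only [Nat.cast_succ, coe_addLeft, Perm.mul_apply]
        ring
      rw [this]
      exact G.mul_mem hT ih
  simpa using key a.val

lemma IsStabilizerInvariant.image_mul (hT : Equiv.addLeft 1 ∈ G) {S : Set (ZMod p)}
    (hS : IsStabilizerInvariant G 0 S) {m : ZMod p} (hm : m ≠ 0) :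
    IsStabilizerInvariant G 0 ((m * ·) '' S) := by
  suffices ∀ n : ℕ, (n : ZMod p) ≠ 0 → ∀ S, IsStabilizerInvariant G 0 S →
      IsStabilizerInvariant G 0 (((n : ZMod p) * ·) '' S) by
    rw [← ZMod.natCast_zmod_val m] at hm ⊢
    exact this m.val hm S hS
  have hT' : ∀ a : ZMod p, Equiv.addLeft a ∈ G := addLeft_mem_of_addLeft_one_mem hT
  intro n
  induction n using induction_on_primes with
  | zero => simp
  | one => simp
  | prime_mul q n hq ih =>
    intro hqn S hS
    rw [Nat.cast_mul] at hqn ⊢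
    have hinj : Function.Injective (q • · : ZMod p → ZMod p) := by
      simpa only [nsmul_eq_mul] using mul_right_injective₀ (left_ne_zero_of_mul hqn)
    have himage : (((q : ZMod p) * n * ·) '' S) = (q • ·) '' (((n : ZMod p) * ·) '' S) := by
      simp only [Set.image_image, nsmul_eq_mul, mul_assoc]
    rw [himage]
    exact (ih (right_ne_zero_of_mul hqn) S hS).image_nsmul_of_prime hT' hq hinj

lemma ncard_suborbit_le (hT : Equiv.addLeft 1 ∈ G) {x y : ZMod p} (hx : x ≠ 0) (hy : y ≠ 0) :
    (suborbit G 0 y).ncard ≤ (suborbit G 0 x).ncard := by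
  have hyx : (y * x⁻¹) * x = y := by field_simp
  calc (suborbit G 0 y).ncard ≤ (((y * x⁻¹) * ·) '' suborbit G 0 x).ncard := by
        refine Set.ncard_le_ncard ?_ (Set.toFinite _)
        exact ((isStabilizerInvariant_suborbit x).image_mul hT (by simp [hx, hy])).suborbit_subset
          ⟨x, mem_suborbit_self x, hyx⟩
    _ ≤ (suborbit G 0 x).ncard := Set.ncard_image_le (Set.toFinite _)

lemma ncard_suborbit_dvd (hT : Equiv.addLeft 1 ∈ G) {S : Set (ZMod p)}
    (hS : IsStabilizerInvariant G 0 S) (h0 : 0 ∉ S) {x : ZMod p} (hx : x ≠ 0) :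
    (suborbit G 0 x).ncard ∣ S.ncard :=
  hS.dvd_ncard fun _ hy => (ncard_suborbit_le hT hx (ne_of_mem_of_not_mem hy h0)).antisymm
    (ncard_suborbit_le hT (ne_of_mem_of_not_mem hy h0) hx)

end PrimeCyclic

lemma Equiv.Perm.exists_equiv_zmod_of_orderOf_eq {α : Type*} [Fintype α] {p : ℕ} [Fact p.Prime]
    (hcard : Fintype.card α = p) {σ : Perm α} (hσ : orderOf σ = p) (x₀ : α) :
    ∃ e : α ≃ ZMod p, e x₀ = 0 ∧ ∀ x, e (σ x) = e x + 1 := by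
  classical
  have hcyc : σ.IsCycle := isCycle_of_prime_order'' (hcard ▸ Fact.out) (hσ.trans hcard.symm)
  have hsupp : σ.support = Finset.univ :=
    Finset.eq_univ_of_card _ (by rw [← hcyc.orderOf, hσ, hcard])
  have hmoves (x : α) : σ x ≠ x := Perm.mem_support.1 (hsupp ▸ Finset.mem_univ x)
  let f : ZMod p → α := fun k => (σ ^ k.val) x₀
  have hf_pow (n : ℕ) : f n = (σ ^ n) x₀ := by
    simp only [f, ZMod.val_natCast, ← hσ, pow_mod_orderOf]
  have hf_succ (k : ZMod p) : f (k + 1) = σ (f k) := by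
    rw [← ZMod.natCast_zmod_val k, ← Nat.cast_succ, hf_pow, hf_pow, pow_succ', Perm.mul_apply]
  have hbij : Function.Bijective f := by
    refine (Fintype.bijective_iff_surjective_and_card f).2 ⟨fun y => ?_, by simp [hcard]⟩
    obtain ⟨n, hn⟩ := hcyc.exists_pow_eq (hmoves x₀) (hmoves y)
    exact ⟨n, (hf_pow n).trans hn⟩
  refine ⟨(Equiv.ofBijective f hbij).symm, ?_, fun x => ?_⟩
  · rw [Equiv.symm_apply_eq]
    simpa using (hf_pow 0).symm
  · obtain ⟨k, rfl⟩ := hbij.2 x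
    rw [← hf_succ, ← Equiv.ofBijective_apply f hbij, ← Equiv.ofBijective_apply f hbij,
      Equiv.symm_apply_apply, Equiv.symm_apply_apply]

section PrimeDegree

variable {α β : Type*}

lemma suborbit_map_permCongr (e : α ≃ β) (H : Subgroup (Perm α)) (ω x : α) :
    suborbit (H.map e.permCongrHom.toMonoidHom) (e ω) (e x) = e '' suborbit H ω x := by
  ext y
  constructor
  · rintro ⟨_, ⟨h, hh, rfl⟩, hω, rfl⟩
    simp only [MulEquiv.coe_toMonoidHom, Equiv.permCongrHom_coe, Equiv.permCongr_apply,
      Equiv.symm_apply_apply, EmbeddingLike.apply_eq_iff_eq] at hω ⊢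
    exact ⟨h x, ⟨h, hh, hω, rfl⟩, rfl⟩
  · rintro ⟨_, ⟨h, hh, hω, rfl⟩, rfl⟩
    exact ⟨e.permCongr h, ⟨h, hh, rfl⟩, by simp [hω], by simp⟩

lemma IsStabilizerInvariant.map_permCongr {H : Subgroup (Perm α)} {ω : α} {S : Set α}
    (hS : IsStabilizerInvariant H ω S) (e : α ≃ β) :
    IsStabilizerInvariant (H.map e.permCongrHom.toMonoidHom) (e ω) (e '' S) := by
  rintro _ ⟨h, hh, rfl⟩ hω _ ⟨x, hx, rfl⟩
  simp only [MulEquiv.coe_toMonoidHom, Equiv.permCongrHom_coe, Equiv.permCongr_apply,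
    Equiv.symm_apply_apply, EmbeddingLike.apply_eq_iff_eq] at hω ⊢
  exact ⟨h x, hS h hh hω hx, rfl⟩

variable [Finite α] {p : ℕ} [Fact p.Prime]

lemma exists_mem_orderOf_eq_of_isPretransitive (H : Subgroup (Perm α))
    [MulAction.IsPretransitive H α] (hcard : Nat.card α = p) : ∃ σ ∈ H, orderOf σ = p := by
  obtain ⟨x⟩ : Nonempty α := Nat.card_pos_iff.1 (hcard ▸ (Fact.out : p.Prime).pos) |>.1
  have hdvd : p ∣ Nat.card H := by
    rw [← hcard, ← MulAction.index_stabilizer_of_transitive H x]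
    exact Subgroup.index_dvd_card _
  obtain ⟨σ, hσ⟩ := exists_prime_orderOf_dvd_card' p hdvd
  exact ⟨σ, σ.2, by rwa [Subgroup.orderOf_coe]⟩

theorem ncard_suborbit_dvd_of_card_eq_prime (H : Subgroup (Perm α))
    [MulAction.IsPretransitive H α] (hcard : Nat.card α = p) {ω : α} {S : Set α}
    (hS : IsStabilizerInvariant H ω S) (hωS : ω ∉ S) {x : α} (hx : x ≠ ω) :
    (suborbit H ω x).ncard ∣ S.ncard := by
  have := Fintype.ofFinite α
  obtain ⟨σ, hσH, hσ⟩ := exists_mem_orderOf_eq_of_isPretransitive H hcard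
  obtain ⟨e, he0, heσ⟩ :=
    Perm.exists_equiv_zmod_of_orderOf_eq (by rwa [← Nat.card_eq_fintype_card]) hσ ω
  have hT : Equiv.addLeft 1 ∈ H.map e.permCongrHom.toMonoidHom :=
    ⟨σ, hσH, by ext k; simp [heσ, add_comm]⟩
  have := ncard_suborbit_dvd hT (he0 ▸ hS.map_permCongr e) (by simpa [← he0] using hωS)
    (x := e x) (by simpa [← he0] using hx)
  rwa [← he0, suborbit_map_permCongr, Set.ncard_image_of_injective _ e.injective,
    Set.ncard_image_of_injective _ e.injective] at this

end PrimeDegree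

namespace SimpleGraph

variable {V : Type*} {Γ : SimpleGraph V}

lemma Iso.ncard_commonNeighbors {W : Type*} {Γ' : SimpleGraph W} (φ : Γ ≃g Γ') (a b : V) :
    (Γ'.commonNeighbors (φ a) (φ b)).ncard = (Γ.commonNeighbors a b).ncard := by
  rw [← Set.ncard_image_of_injective _ φ.injective]
  congr 1
  ext x
  obtain ⟨y, rfl⟩ := φ.surjective x
  simp [mem_commonNeighbors, φ.injective.mem_set_image, Iso.map_adj_iff]

lemma _root_.ArcTransitive.ncard_commonNeighbors_eq (hA : ArcTransitive Γ) {a b a' b' : V}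
    (h : Γ.Adj a b) (h' : Γ.Adj a' b') :
    (Γ.commonNeighbors a b).ncard = (Γ.commonNeighbors a' b').ncard := by
  obtain ⟨φ, rfl, rfl⟩ := hA h h'
  exact (φ.ncard_commonNeighbors a b).symm

lemma _root_.TwoGeodesicTransitive.ncard_commonNeighbors_eq (h2gt : TwoGeodesicTransitive Γ)
    {a b x a' b' x' : V} (h : Is2Geodesic Γ a b x) (h' : Is2Geodesic Γ a' b' x') :
    (Γ.commonNeighbors a x).ncard = (Γ.commonNeighbors a' x').ncard := by
  obtain ⟨φ, rfl, -, rfl⟩ := h2gt.2 h h'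
  exact (φ.ncard_commonNeighbors a x).symm

lemma _root_.TwoGeodesicTransitive.twoArcTransitive (h2gt : TwoGeodesicTransitive Γ)
    (h : ∀ a b, Γ.Adj a b → Γ.commonNeighbors a b = ∅) : TwoArcTransitive Γ := by
  have hgeod {a b c : V} (habc : Is2Arc Γ a b c) : Is2Geodesic Γ a b c :=
    ⟨habc.1, habc.2.1, habc.2.2, fun hac =>
      (h a b habc.1).subset (Γ.mem_commonNeighbors.2 ⟨hac, habc.2.1⟩)⟩
  exact ⟨h2gt.1, fun _ _ _ _ _ _ h₁ h₂ => h2gt.2 (hgeod h₁) (hgeod h₂)⟩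

lemma Connected.eq_top_of_neighborSet_subset (hconn : Γ.Connected)
    (h : ∀ a b, Γ.Adj a b → Γ.neighborSet b ⊆ insert a (Γ.neighborSet a)) : Γ = ⊤ := by
  have hclosed {a b : V} (hab : Γ.Adj a b) :
      insert a (Γ.neighborSet a) = insert b (Γ.neighborSet b) :=
    Set.Subset.antisymm (Set.insert_subset (Set.mem_insert_of_mem _ hab.symm) (h b a hab.symm))
      (Set.insert_subset (Set.mem_insert_of_mem _ hab) (h a b hab))
  have hreach {a b : V} (w : Γ.Walk a b) :
      insert a (Γ.neighborSet a) = insert b (Γ.neighborSet b) := by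
    induction w with
    | nil => rfl
    | cons hadj _ ih => exact (hclosed hadj).trans ih
  ext a b
  refine ⟨Adj.ne, fun hab => ?_⟩
  have hb : b ∈ insert a (Γ.neighborSet a) := by
    rw [hreach (hconn.preconnected a b).some]
    exact Set.mem_insert b _
  exact hb.resolve_left hab.symm

lemma Is2Geodesic.map {W : Type*} {Γ' : SimpleGraph W} {a b c : V} (hg : Is2Geodesic Γ a b c)
    (φ : Γ ≃g Γ') : Is2Geodesic Γ' (φ a) (φ b) (φ c) :=
  ⟨φ.map_adj_iff.2 hg.1, φ.map_adj_iff.2 hg.2.1, φ.injective.ne hg.2.2.1,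
    fun h => hg.2.2.2 (φ.map_adj_iff.1 h)⟩

lemma _root_.ArcTransitive.exists_is2Geodesic (hA : ArcTransitive Γ) (hconn : Γ.Connected)
    (hnc : Γ ≠ ⊤) {v u : V} (h : Γ.Adj v u) : ∃ w, Is2Geodesic Γ v u w := by
  by_contra! hno
  refine hnc (hconn.eq_top_of_neighborSet_subset fun a b hab x hx => ?_)
  by_contra hxa
  obtain ⟨φ, rfl, rfl⟩ := hA h hab
  have hg : Is2Geodesic Γ (φ v) (φ u) x :=
    ⟨hab, hx, fun hvx => hxa (hvx ▸ Set.mem_insert _ _),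
      fun hvx => hxa (Set.mem_insert_of_mem _ hvx)⟩
  exact hno (φ.symm x) (by simpa using hg.map φ.symm)

section Finite

variable [Finite V]

lemma Adj.ncard_neighborSet_eq {v u : V} (h : Γ.Adj v u) :
    (Γ.neighborSet u).ncard = (Γ.commonNeighbors v u).ncard +
      (Γ.neighborSet u \ insert v (Γ.neighborSet v)).ncard + 1 := by
  rw [← Set.ncard_inter_add_ncard_sdiff_eq_ncard (Γ.neighborSet u) (insert v (Γ.neighborSet v)),
    Set.inter_insert_of_mem ((Γ.mem_neighborSet u v).2 h.symm),
    Set.ncard_insert_of_notMem (fun hv => Γ.irrefl hv.2), Set.inter_comm, ← commonNeighbors_eq]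
  ring

lemma Is2Geodesic.ncard_commonNeighbors_add_le {v u w : V} (hg : Is2Geodesic Γ v u w) :
    (Γ.commonNeighbors v u).ncard + (Γ.commonNeighbors w u).ncard + 3 ≤
      (Γ.commonNeighbors v w).ncard + (Γ.neighborSet u).ncard := by
  obtain ⟨hvu, huw, hvw, hnvw⟩ := hg
  set A := Γ.commonNeighbors v u
  set B := Γ.commonNeighbors w u
  have hunion : insert v (insert w (A ∪ B)) ⊆ Γ.neighborSet u := by
    rintro x (rfl | rfl | ⟨-, hx⟩ | ⟨-, hx⟩)
    exacts [hvu.symm, huw, hx, hx]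
  have hinter : insert u (A ∩ B) ⊆ Γ.commonNeighbors v w := by
    rintro x (rfl | ⟨⟨hvx, -⟩, hwx, -⟩)
    exacts [⟨hvu, huw.symm⟩, ⟨hvx, hwx⟩]
  have hv : v ∉ insert w (A ∪ B) := by
    rintro (rfl | ⟨hvv, -⟩ | ⟨hwv, -⟩)
    exacts [hvw rfl, Γ.irrefl hvv, hnvw hwv.symm]
  have hw : w ∉ A ∪ B := by
    rintro (⟨hvw', -⟩ | ⟨hww, -⟩)
    exacts [hnvw hvw', Γ.irrefl hww]
  have hu : u ∉ A ∩ B := fun hu => Γ.irrefl hu.1.2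
  have h₁ := Set.ncard_le_ncard hunion
  have h₂ := Set.ncard_le_ncard hinter
  rw [Set.ncard_insert_of_notMem hv, Set.ncard_insert_of_notMem hw] at h₁
  rw [Set.ncard_insert_of_notMem hu] at h₂
  have := Set.ncard_inter_add_ncard_union A B
  omega

lemma neighborSet_eq_of_ncard_commonNeighbors_eq {p : ℕ}
    (hreg : ∀ x, (Γ.neighborSet x).ncard = p) {a x : V} (h : (Γ.commonNeighbors a x).ncard = p) :
    Γ.neighborSet a = Γ.neighborSet x :=
  (Set.eq_of_subset_of_ncard_le (Γ.commonNeighbors_subset_neighborSet_left a x)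
    (by rw [h, hreg])).symm.trans
  (Set.eq_of_subset_of_ncard_le (Γ.commonNeighbors_subset_neighborSet_right a x) (by rw [h, hreg]))

lemma add_one_dvd_ncard_neighborSet_of_twins {n : ℕ}
    (hn : ∀ a b, Γ.Adj a b → (Γ.neighborSet b \ insert a (Γ.neighborSet a)).ncard = n)
    (htwin : ∀ a b x, Is2Geodesic Γ a b x → Γ.neighborSet a = Γ.neighborSet x) (u : V) :
    n + 1 ∣ (Γ.neighborSet u).ncard := by
  refine Set.dvd_ncard_of_forall_ncard_fiber_eq Γ.neighborSet fun x (hx : Γ.Adj u x) => ?_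
  have hfiber : {y | y ∈ Γ.neighborSet u ∧ Γ.neighborSet y = Γ.neighborSet x} =
      insert x (Γ.neighborSet u \ insert x (Γ.neighborSet x)) := by
    ext y
    simp only [Set.mem_ofPred_eq, Set.mem_insert_iff, Set.mem_sdiff, mem_neighborSet, not_or]
    constructor
    · rintro ⟨huy, hyx⟩
      refine or_iff_not_imp_left.2 fun hne => ⟨huy, hne, fun hxy => Γ.irrefl (v := y) ?_⟩
      rwa [← mem_neighborSet, hyx]
    · rintro (rfl | ⟨huy, hne, hxy⟩)
      · exact ⟨hx, rfl⟩
      · exact ⟨huy, (htwin x u y ⟨hx.symm, huy, Ne.symm hne, hxy⟩).symm⟩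
  rw [hfiber, Set.ncard_insert_of_notMem (fun h => h.2 (Set.mem_insert x _)), hn x u hx.symm]

end Finite

lemma dvd_degree_mul_of_forall_ncard_eq [Fintype V] {p n c : ℕ}
    (hreg : ∀ x, (Γ.neighborSet x).ncard = p)
    (hn : ∀ a b, Γ.Adj a b → (Γ.neighborSet b \ insert a (Γ.neighborSet a)).ncard = n)
    (hc : ∀ a b x, Is2Geodesic Γ a b x → (Γ.commonNeighbors a x).ncard = c) (u : V) :
    c ∣ p * n := by
  classical
  let T : Finset V := {x | ∃ m, Is2Geodesic Γ u m x}
  have hcount := Finset.card_mul_eq_card_mul Γ.Adj (s := (Γ.neighborSet u).toFinset) (t := T)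
    (m := n) (n := c) (fun m hm => ?_) (fun x hx => ?_)
  · rw [← Set.ncard_eq_toFinset_card', hreg] at hcount
    exact ⟨T.card, hcount.trans (mul_comm _ _)⟩
  · have hum : Γ.Adj u m := by simpa using hm
    rw [← hn u m hum, Set.ncard_eq_toFinset_card']
    congr 1
    ext x
    simp only [Finset.bipartiteAbove, Finset.mem_filter, Finset.mem_univ, true_and, T,
      Set.mem_toFinset, Set.mem_sdiff, Set.mem_insert_iff, mem_neighborSet, not_or]
    exact ⟨fun ⟨⟨m', hg⟩, hmx⟩ => ⟨hmx, hg.2.2.1.symm, hg.2.2.2⟩,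
      fun ⟨hmx, hne, hux⟩ => ⟨⟨m, hum, hmx, Ne.symm hne, hux⟩, hmx⟩⟩
  · obtain ⟨m, hg⟩ : ∃ m, Is2Geodesic Γ u m x := by simpa [T] using hx
    rw [← hc u m x hg, Set.ncard_eq_toFinset_card']
    congr 1
    ext y
    simp [Finset.bipartiteBelow, mem_commonNeighbors, adj_comm]

theorem _root_.TwoGeodesicTransitive.ncard_commonNeighbors_le [Fintype V]
    (h2gt : TwoGeodesicTransitive Γ) {p n : ℕ} (hp : p.Prime)
    (hreg : ∀ x, (Γ.neighborSet x).ncard = p)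
    (hn : ∀ a b, Γ.Adj a b → (Γ.neighborSet b \ insert a (Γ.neighborSet a)).ncard = n)
    (hnp : n + 1 < p) {v u w : V} (hg : Is2Geodesic Γ v u w) :
    (Γ.commonNeighbors v w).ncard ≤ n := by
  set c := (Γ.commonNeighbors v w).ncard
  have hc (a b x : V) (h : Is2Geodesic Γ a b x) : (Γ.commonNeighbors a x).ncard = c :=
    h2gt.ncard_commonNeighbors_eq h hg
  have hc_pos : 0 < c := (Set.ncard_pos (Set.toFinite _)).2 ⟨u, hg.1, hg.2.1.symm⟩
  have hn_pos : 0 < n := by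
    rw [← hn v u hg.1]
    exact (Set.ncard_pos (Set.toFinite _)).2 ⟨w, hg.2.1, not_or.2 ⟨hg.2.2.1.symm, hg.2.2.2⟩⟩
  -- If `c = p`, the ends of every 2-geodesic are twins, and the twin classes in `Γ(u)` have
  -- size `n + 1`.
  have hc_lt : c < p := by
    refine (hreg v ▸ Set.ncard_le_ncard (Γ.commonNeighbors_subset_neighborSet_left v w)).lt_of_ne
      fun hcp => ?_
    have := add_one_dvd_ncard_neighborSet_of_twins hn (fun a b x h =>
      neighborSet_eq_of_ncard_commonNeighbors_eq hreg ((hc a b x h).trans hcp)) u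
    rw [hreg, Nat.dvd_prime hp] at this
    omega
  exact Nat.le_of_dvd hn_pos <| (Nat.coprime_of_lt_prime hc_pos.ne' hc_lt hp).symm
    |>.dvd_of_dvd_mul_left (dvd_degree_mul_of_forall_ncard_eq hreg hn hc u)

-- The group `G_u^{Γ(u)}` induced on `Γ(u)` by the stabiliser of `u` in `Aut Γ`.
variable (Γ) in
def localPermGroup (u : V) : Subgroup (Perm (Γ.neighborSet u)) where
  carrier := {π | ∃ φ : Γ ≃g Γ, φ u = u ∧ ∀ x, (π x : V) = φ x}
  one_mem' := ⟨1, rfl, fun _ => rfl⟩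
  mul_mem' := by
    rintro π π' ⟨φ, hφ, hπ⟩ ⟨φ', hφ', hπ'⟩
    exact ⟨φ * φ', by simp [RelIso.mul_apply, hφ', hφ], fun x => by
      simp [hπ, hπ', RelIso.mul_apply]⟩
  inv_mem' := by
    rintro π ⟨φ, hφ, hπ⟩
    refine ⟨φ⁻¹, by conv_lhs => rw [← hφ, RelIso.inv_apply_self],
      fun x => φ.injective ?_⟩
    rw [← hπ, RelIso.apply_inv_self]
    simp

lemma exists_mem_localPermGroup {u : V} (φ : Γ ≃g Γ) (hu : φ u = u) :
    ∃ π ∈ Γ.localPermGroup u, ∀ x, (π x : V) = φ x := by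
  refine ⟨Perm.subtypePerm φ.toEquiv fun x => ?_, ⟨φ, hu, fun _ => rfl⟩, fun _ => rfl⟩
  conv_lhs => rw [← hu]
  exact φ.map_adj_iff

lemma isPretransitive_localPermGroup (hA : ArcTransitive Γ) (u : V) :
    MulAction.IsPretransitive (Γ.localPermGroup u) (Γ.neighborSet u) := by
  refine ⟨fun x y => ?_⟩
  obtain ⟨φ, hu, hxy⟩ := hA x.2 y.2
  obtain ⟨π, hπ, hπφ⟩ := exists_mem_localPermGroup φ hu
  exact ⟨⟨π, hπ⟩, Subtype.ext ((hπφ x).trans hxy)⟩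

lemma suborbit_localPermGroup_eq (h2gt : TwoGeodesicTransitive Γ) {v u w : V}
    (hg : Is2Geodesic Γ v u w) :
    suborbit (Γ.localPermGroup u) ⟨v, hg.1.symm⟩ ⟨w, hg.2.1⟩ =
      {y : Γ.neighborSet u | (y : V) ∈ (insert v (Γ.neighborSet v))ᶜ} := by
  refine Set.ext fun ⟨y, hy⟩ => ?_
  simp only [Set.mem_ofPred_eq, Set.mem_compl_iff, Set.mem_insert_iff, mem_neighborSet, not_or]
  constructor
  · rintro ⟨π, ⟨φ, hu, hπφ⟩, hπv, hπw⟩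
    have hv : φ v = v := (hπφ _).symm.trans (congrArg Subtype.val hπv)
    have hw : φ w = y := (hπφ _).symm.trans (congrArg Subtype.val hπw)
    refine ⟨fun hyv => hg.2.2.1 (φ.injective ?_).symm, fun hvy => hg.2.2.2 ?_⟩
    · rw [hv, hw, hyv]
    · rwa [← φ.map_adj_iff, hv, hw]
  · rintro ⟨hyv, hvy⟩
    obtain ⟨φ, hv, hu, hw⟩ := h2gt.2 hg ⟨hg.1, hy, Ne.symm hyv, hvy⟩
    obtain ⟨π, hπ, hπφ⟩ := exists_mem_localPermGroup φ hu
    exact ⟨π, hπ, Subtype.ext ((hπφ _).trans hv), Subtype.ext ((hπφ _).trans hw)⟩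

theorem ncard_neighborSet_sdiff_dvd {p : ℕ} (hp : p.Prime) (h2gt : TwoGeodesicTransitive Γ)
    {v u w : V} (hdeg : Nat.card (Γ.neighborSet u) = p) (hg : Is2Geodesic Γ v u w) :
    (Γ.neighborSet u \ insert v (Γ.neighborSet v)).ncard ∣ (Γ.commonNeighbors v u).ncard := by
  have := Fact.mk hp
  have := isPretransitive_localPermGroup h2gt.1 u
  have := Nat.finite_of_card_ne_zero (hdeg ▸ hp.ne_zero)
  have hS : IsStabilizerInvariant (Γ.localPermGroup u) ⟨v, hg.1.symm⟩
      {y : Γ.neighborSet u | (y : V) ∈ Γ.neighborSet v} := by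
    rintro π ⟨φ, -, hπφ⟩ hπv y hy
    have hv : φ v = v := (hπφ _).symm.trans (congrArg Subtype.val hπv)
    change Γ.Adj v (π y)
    rw [hπφ, ← hv]
    exact φ.map_adj_iff.2 hy
  have hdvd := ncard_suborbit_dvd_of_card_eq_prime _ hdeg hS (Γ.irrefl (v := v))
    (x := ⟨w, hg.2.1⟩) (fun h => hg.2.2.1 (congrArg Subtype.val h).symm)
  rw [suborbit_localPermGroup_eq h2gt hg, Set.ncard_subtype, Set.ncard_subtype] at hdvd
  rwa [Set.sdiff_eq, Set.inter_comm]

end SimpleGraph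

open SimpleGraph

theorem stmt1 {V : Type*} [Fintype V] (Γ : SimpleGraph V) (p : ℕ)
    (hp : p.Prime)
    (hreg : ∀ v : V, Nat.card (Γ.neighborSet v) = p)
    (hconn : Γ.Connected)
    (hnc : Γ ≠ ⊤)
    (h2gt : TwoGeodesicTransitive Γ)
    (h2at : ¬ TwoArcTransitive Γ) :
    ∀ v u : V, Γ.Adj v u →
      Nat.card {x : V | Γ.Adj v x ∧ Γ.Adj u x} = (p - 1) / 2 := by
  have hreg' (x : V) : (Γ.neighborSet x).ncard = p := hreg x
  intro v u hvu
  change (Γ.commonNeighbors v u).ncard = (p - 1) / 2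
  set l := (Γ.commonNeighbors v u).ncard
  set n := (Γ.neighborSet u \ insert v (Γ.neighborSet v)).ncard
  have hl (a b : V) (h : Γ.Adj a b) : (Γ.commonNeighbors a b).ncard = l :=
    h2gt.1.ncard_commonNeighbors_eq h hvu
  have hsplit : p = l + n + 1 := (hreg' u).symm.trans hvu.ncard_neighborSet_eq
  have hn (a b : V) (h : Γ.Adj a b) :
      (Γ.neighborSet b \ insert a (Γ.neighborSet a)).ncard = n := by
    have := h.ncard_neighborSet_eq
    rw [hreg', hl a b h] at this
    omega
  have hl_pos : 0 < l := Nat.pos_of_ne_zero fun hl0 => h2at <| h2gt.twoArcTransitive fun a b h =>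
    (Set.ncard_eq_zero (Set.toFinite _)).1 ((hl a b h).trans hl0)
  obtain ⟨w, hg⟩ := h2gt.1.exists_is2Geodesic hconn hnc hvu
  have hcn := h2gt.ncard_commonNeighbors_le hp hreg' hn (by omega) hg
  have hlow := hg.ncard_commonNeighbors_add_le
  rw [hl v u hvu, hl w u hg.2.1.symm, hreg'] at hlow
  have hln : l = n := Nat.eq_of_dvd_of_lt_two_mul hl_pos.ne'
    (ncard_neighborSet_sdiff_dvd hp h2gt (hreg u) hg) (by omega)
  omega
end

section
/- Let q be a prime power with q ≡ 1 (mod 4) and let Γ = P(q) be the Paley graph on F_q. For distinct vertices u, v of Γ: if u and v are adjacent then they have exactly (q-5)/4 common neighbours, and if u and v are not adjacent then they have exactly (q-1)/4 common neighbours. -/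
open SimpleGraph

/-- The Paley graph on the field `F`: distinct `u`, `v` are adjacent iff `u - v` is
a nonzero square (symmetrised via `fromRel`; when `|F| ≡ 1 (mod 4)` the relation is
already symmetric, since `-1` is then a square). -/
def paleyGraph (F : Type*) [Field F] : SimpleGraph F :=
  SimpleGraph.fromRel (fun u v => ∃ x : F, x ≠ 0 ∧ u - v = x ^ 2)


/-! For nonzero `a`, `1 + χ a` is `2` or `0` according as `a` is a square or not, where `χ`
is the quadratic character. So `∑ₓ (1 + χ(u - x)) (1 + χ(v - x))` counts the common neighbours
of `u` and `v` four times, plus a contribution `2` from each of `x = u` and `x = v` when `u ~ v`.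
Expanding the product instead, the linear sums vanish and the correlation sum
`∑ₓ χ(u - x) χ(v - x)` is `-1` (a Jacobi sum), so the total is `q - 1`. Hence
`4 (λ + [u ~ v]) = q - 1` for the number `λ` of common neighbours. -/

open Finset

section QuadraticChar

variable {F : Type*} [Field F] [Fintype F] [DecidableEq F]

local notation "χ" => quadraticChar F

theorem one_add_quadraticChar (a : F) :
    1 + χ a = 2 * (if χ a = 1 then 1 else 0) + if a = 0 then 1 else 0 := by
  by_cases ha : a = 0
  · simp [ha]
  · rcases quadraticChar_dichotomy ha with h | h <;> simp [h, ha]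

/-- The substitution `x = u - (u - v) y` turns this sum into `χ(-1)` times the Jacobi sum
`J(χ, χ) = -χ(-1)`. -/
theorem sum_quadraticChar_sub_mul_quadraticChar_sub (hF : ringChar F ≠ 2) {u v : F}
    (huv : u ≠ v) : ∑ x, χ (u - x) * χ (v - x) = -1 := by
  have hc : u - v ≠ 0 := sub_ne_zero.mpr huv
  have hJ : jacobiSum χ χ = -χ (-1) := by
    rw [← jacobiSum_nontrivial_inv (quadraticChar_ne_one hF), (quadraticChar_isQuadratic F).inv]
  let e : F ≃ F := (Equiv.mulLeft₀ (u - v) hc).trans (Equiv.subLeft u)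
  calc ∑ x, χ (u - x) * χ (v - x)
      = ∑ y, χ (u - e y) * χ (v - e y) := (e.sum_comp fun x => χ (u - x) * χ (v - x)).symm
    _ = ∑ y, χ (-1) * (χ y * χ (1 - y)) := by
        refine sum_congr rfl fun y _ => ?_
        have h₁ : u - e y = (u - v) * y := by simp [e]
        have h₂ : v - e y = (u - v) * (-1 * (1 - y)) := by simp [e]; ring
        rw [h₁, h₂, map_mul, map_mul, map_mul]
        linear_combination (χ (-1) * χ y * χ (1 - y)) * quadraticChar_sq_one hc
    _ = -χ (-1) ^ 2 := by rw [← mul_sum, ← jacobiSum, hJ]; ring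
    _ = -1 := by rw [quadraticChar_sq_one (neg_ne_zero.mpr one_ne_zero)]

theorem sum_one_add_quadraticChar_mul_one_add_eq_card_sub_one (hF : ringChar F ≠ 2) {u v : F}
    (huv : u ≠ v) : ∑ x, (1 + χ (u - x)) * (1 + χ (v - x)) = Fintype.card F - 1 := by
  have hu : ∑ x, χ (u - x) = 0 :=
    ((Equiv.subLeft u).sum_comp χ).trans (quadraticChar_sum_zero hF)
  have hv : ∑ x, χ (v - x) = 0 :=
    ((Equiv.subLeft v).sum_comp χ).trans (quadraticChar_sum_zero hF)
  simp only [add_mul, mul_add, one_mul, mul_one, sum_add_distrib, hu, hv,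
    sum_quadraticChar_sub_mul_quadraticChar_sub hF huv, sum_const, card_univ, nsmul_eq_mul]
  ring

theorem sum_one_add_quadraticChar_mul_one_add_eq_four_mul_card {u v : F} (huv : u ≠ v) :
    ∑ x, (1 + χ (u - x)) * (1 + χ (v - x)) = 4 * #{x | χ (u - x) = 1 ∧ χ (v - x) = 1}
      + 2 * (if χ (u - v) = 1 then 1 else 0) + 2 * (if χ (v - u) = 1 then 1 else 0) := by
  simp only [one_add_quadraticChar (u - _), one_add_quadraticChar (v - _), sub_eq_zero, add_mul,
    mul_add, sum_add_distrib]
  have h_both :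
      ∑ x, (2 * if χ (u - x) = 1 then (1 : ℤ) else 0) * (2 * if χ (v - x) = 1 then 1 else 0)
        = 4 * #{x | χ (u - x) = 1 ∧ χ (v - x) = 1} := by
    rw [← sum_boole, mul_sum]
    refine sum_congr rfl fun x _ => ?_
    split_ifs <;> simp_all
  have h_at_u : ∑ x, (if u = x then (1 : ℤ) else 0) * (2 * if χ (v - x) = 1 then 1 else 0)
      = 2 * if χ (v - u) = 1 then 1 else 0 := by
    simp only [boole_mul, Fintype.sum_ite_eq]
  have h_at_v : ∑ x, (2 * if χ (u - x) = 1 then (1 : ℤ) else 0) * (if v = x then 1 else 0)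
      = 2 * if χ (u - v) = 1 then 1 else 0 := by
    simp only [mul_boole, Fintype.sum_ite_eq]
  have h_at_uv : ∑ x, (if u = x then (1 : ℤ) else 0) * (if v = x then 1 else 0) = 0 :=
    sum_eq_zero fun x _ => by split_ifs <;> simp_all
  rw [h_both, h_at_u, h_at_v, h_at_uv]
  ring

end QuadraticChar

section Paley

variable {F : Type*} [Field F] [Fintype F] [DecidableEq F]

local notation "χ" => quadraticChar F

theorem quadraticChar_neg_one_of_card_mod_four (h4 : Fintype.card F % 4 = 1) : χ (-1) = 1 := by
  rw [quadraticChar_one_iff_isSquare (neg_ne_zero.mpr one_ne_zero),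
    FiniteField.isSquare_neg_one_iff]
  omega

theorem quadraticChar_sub_comm_of_card_mod_four (h4 : Fintype.card F % 4 = 1) (u v : F) :
    χ (u - v) = χ (v - u) := by
  rw [← neg_sub, ← neg_one_mul, map_mul, quadraticChar_neg_one_of_card_mod_four h4, one_mul]

theorem paleyGraph_adj_iff (h4 : Fintype.card F % 4 = 1) {u v : F} :
    (paleyGraph F).Adj u v ↔ χ (u - v) = 1 := by
  have of_sq : ∀ a b : F, (∃ x : F, x ≠ 0 ∧ a - b = x ^ 2) → χ (a - b) = 1 := by
    rintro a b ⟨x, hx, h⟩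
    rw [h, quadraticChar_sq_one' hx]
  rw [paleyGraph, fromRel_adj]
  constructor
  · rintro ⟨-, h | h⟩
    · exact of_sq u v h
    · rw [quadraticChar_sub_comm_of_card_mod_four h4]
      exact of_sq v u h
  · intro h
    have hne : u - v ≠ 0 := fun h0 => by simp [h0] at h
    obtain ⟨r, hr⟩ := (quadraticChar_one_iff_isSquare hne).mp h
    refine ⟨sub_ne_zero.mp hne, Or.inl ⟨r, fun hr0 => hne ?_, by rw [hr, sq]⟩⟩
    simp [hr, hr0]

theorem paleyGraph_four_mul_card_commonNeighbors (h4 : Fintype.card F % 4 = 1) {u v : F}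
    (huv : u ≠ v) [DecidableRel (paleyGraph F).Adj] :
    4 * (Nat.card {x : F | (paleyGraph F).Adj u x ∧ (paleyGraph F).Adj v x}
      + if (paleyGraph F).Adj u v then 1 else 0) + 1 = Fintype.card F := by
  have hF : ringChar F ≠ 2 := fun h => by
    have := FiniteField.even_card_iff_char_two.mp h
    omega
  have hcard : Nat.card {x : F | (paleyGraph F).Adj u x ∧ (paleyGraph F).Adj v x}
      = #{x | χ (u - x) = 1 ∧ χ (v - x) = 1} := by
    simp only [paleyGraph_adj_iff h4, Nat.card_eq_fintype_card, Set.coe_ofPred,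
      Fintype.card_subtype]
  have key := (sum_one_add_quadraticChar_mul_one_add_eq_card_sub_one hF huv).symm.trans
    (sum_one_add_quadraticChar_mul_one_add_eq_four_mul_card huv)
  rw [quadraticChar_sub_comm_of_card_mod_four h4 v u] at key
  rw [hcard]
  simp only [paleyGraph_adj_iff h4]
  split_ifs at key ⊢ <;> omega

end Paley

theorem stmt18 (q : ℕ) (F : Type*) [Field F] [Fintype F]
    (hcard : Fintype.card F = q) (hq : q % 4 = 1) :
    ∀ u v : F, u ≠ v →
      ((paleyGraph F).Adj u v →
        Nat.card {x : F | (paleyGraph F).Adj u x ∧ (paleyGraph F).Adj v x} = (q - 5) / 4) ∧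
      (¬ (paleyGraph F).Adj u v →
        Nat.card {x : F | (paleyGraph F).Adj u x ∧ (paleyGraph F).Adj v x} = (q - 1) / 4) := by
  classical
  intro u v huv
  have key := paleyGraph_four_mul_card_commonNeighbors (hcard ▸ hq) huv
  rw [hcard] at key
  constructor
  · intro hadj
    rw [if_pos hadj] at key
    omega
  · intro hadj
    rw [if_neg hadj] at key
    omega
end
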